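/- arXiv:2508.12452 — 3 statements merged into one kernel-verified Lean document; each statement's English description precedes it below -/
import Mathlib

section
/- Let μ_1, ν_1, μ_2, ν_2 ∈ M_P with μ_1 equivalent to μ_2 and ν_1 equivalent to ν_2, and suppose limsup_{l→∞} μ_i([−l,l])/ν_i([−l,l]) < ∞. Then O^p(ℝ, X, μ_1, ν_1) = O^p(ℝ, X, μ_2, ν_2). -/
open MeasureTheory Filter Topology
open scoped ENNReal NNReal

/-- The averaged `p`-integral over the window `[θ, θ+h]`. -/
noncomputable def weylAvg {X : Type*} [NormedAddCommGroup X] (p : ℝ) (u : ℝ → X)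
    (h θ : ℝ) : ℝ≥0∞ :=
  ((ENNReal.ofReal h)⁻¹ * ∫⁻ s in Set.Ioc θ (θ + h), (‖u s‖₊ : ℝ≥0∞) ^ p) ^ (1 / p)

/-- The Weyl seminorm `‖u‖_{W^p} = lim_{h→∞} sup_θ ((1/h)∫_θ^{θ+h} ‖u‖^p)^{1/p}`. -/
noncomputable def weylNorm {X : Type*} [NormedAddCommGroup X] (p : ℝ) (u : ℝ → X) : ℝ≥0∞ :=
  Filter.limsup (fun h => ⨆ θ : ℝ, weylAvg p u h θ) Filter.atTop

/-- `W^p`-bounded functions: locally `p`-integrable (here: measurable) with finite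
Weyl seminorm. -/
def WpB {X : Type*} [NormedAddCommGroup X] (p : ℝ) (u : ℝ → X) : Prop :=
  AEStronglyMeasurable u volume ∧ weylNorm p u < ⊤

/-- `p`-th Weyl almost automorphic functions. -/
def WpAA {X : Type*} [NormedAddCommGroup X] (p : ℝ) (u : ℝ → X) : Prop :=
  WpB p u ∧ ∀ γ' : ℕ → ℝ, ∃ (φ : ℕ → ℕ) (v : ℝ → X), StrictMono φ ∧
    Tendsto (fun n => weylNorm p (fun t => u (t + γ' (φ n)) - v t)) atTop (𝓝 0) ∧
    Tendsto (fun n => weylNorm p (fun t => v (t - γ' (φ n)) - u t)) atTop (𝓝 0)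

/-- The class `M_P`: positive measures on `ℝ` with infinite total mass which are
finite on compact intervals. -/
def MemMP (μ : Measure ℝ) : Prop :=
  μ Set.univ = ⊤ ∧ ∀ a b : ℝ, μ (Set.Icc a b) < ⊤

/-- The local Weyl quantity `lim_{h→∞} ((1/h)∫_θ^{θ+h} ‖u‖^p)^{1/p}`. -/
noncomputable def weylLocal {X : Type*} [NormedAddCommGroup X] (p : ℝ) (u : ℝ → X)
    (θ : ℝ) : ℝ≥0∞ :=
  Filter.limsup (fun h => weylAvg p u h θ) Filter.atTop

/-- Membership in the ergodic space `O^p(ℝ, X, μ, ν)`. -/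
def MemO {X : Type*} [NormedAddCommGroup X] (p : ℝ) (μ ν : Measure ℝ) (u : ℝ → X) : Prop :=
  WpB p u ∧
    Tendsto (fun l : ℝ =>
        (ν (Set.Icc (-l) l))⁻¹ * ∫⁻ θ in Set.Icc (-l) l, weylLocal p u θ ∂μ)
      atTop (𝓝 0)

/-- Condition `(B₁)`: `limsup_{l→∞} μ([−l,l])/ν([−l,l]) < ∞`. -/
def CondB1 (μ ν : Measure ℝ) : Prop :=
  Filter.limsup (fun l : ℝ => μ (Set.Icc (-l) l) / ν (Set.Icc (-l) l)) atTop < ⊤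

/-- Equivalence of measures: `α ν(B) ≤ μ(B) ≤ β ν(B)` outside a bounded interval. -/
def EquivMeas (μ ν : Measure ℝ) : Prop :=
  ∃ (α β : ℝ≥0∞) (A : Set ℝ), 0 < α ∧ α < ⊤ ∧ 0 < β ∧ β < ⊤ ∧ Bornology.IsBounded A ∧
    ∀ B : Set ℝ, MeasurableSet B → B ∩ A = ∅ → α * ν B ≤ μ B ∧ μ B ≤ β * ν B

/-- Condition `(B₂)`: translates of sets away from a bounded interval have
comparable measure. -/
def CondB2 (μ : Measure ℝ) : Prop :=
  ∀ ω : ℝ, ∃ (ρ : ℝ≥0∞) (J : Set ℝ), 0 < ρ ∧ ρ < ⊤ ∧ Bornology.IsBounded J ∧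
    ∀ A : Set ℝ, MeasurableSet A → A ∩ J = ∅ →
      μ ((fun a => a + ω) '' A) ≤ ρ * μ A

/-- Membership in the ergodic space `E(ℝ, X, μ, ν)`. -/
def MemE {X : Type*} [NormedAddCommGroup X] (μ ν : Measure ℝ) (u : ℝ → X) : Prop :=
  Tendsto (fun l : ℝ =>
      (ν (Set.Icc (-l) l))⁻¹ * ∫⁻ t in Set.Icc (-l) l, (‖u t‖₊ : ℝ≥0∞) ∂μ)
    atTop (𝓝 0)

/-! Away from a bounded interval `S`, equivalence of `μ₁, μ₂` gives `μ₂ ≤ μ₂|_S + c • μ₁` as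
measures, so `∫_{[-l,l]} g dμ₂ ≤ ‖u‖_{W^p} μ₂(S) + c ∫_{[-l,l]} g dμ₁` for
`g = weylLocal p u ≤ ‖u‖_{W^p}`. Likewise `ν₁([-l,l]) ≤ ν₁(S') + d ν₂([-l,l])`, and since
`ν₁([-l,l]) → ∞` this gives `ν₂([-l,l])⁻¹ ≤ 2d ν₁([-l,l])⁻¹` for large `l`. Hence the means
defining `O^p(μ₂, ν₂)` are bounded by a constant times those defining `O^p(μ₁, ν₁)`, plus a
term `C / ν₁([-l,l]) → 0`. -/

namespace ENNReal

theorem inv_le_mul_inv_of_le_mul {a b C : ℝ≥0∞} (hC₀ : C ≠ 0) (hC : C ≠ ∞) (h : a ≤ C * b) :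
    b⁻¹ ≤ C * a⁻¹ := by
  rwa [← div_eq_mul_inv, ENNReal.le_div_iff_mul_le (Or.inr hC₀) (Or.inr hC), mul_comm,
    ← div_eq_mul_inv, ENNReal.div_le_iff_le_mul (Or.inr hC) (Or.inr hC₀)]

theorem eventually_le_two_mul_of_le_add {ι : Type*} {f : Filter ι} {a b : ι → ℝ≥0∞}
    {K : ℝ≥0∞} (ha : Tendsto a f (𝓝 ∞)) (hK : K ≠ ∞) (hab : ∀ i, a i ≤ K + b i) :
    ∀ᶠ i in f, a i ≤ 2 * b i := by
  have h2K : 2 * K < ∞ := ENNReal.mul_lt_top ofNat_lt_top hK.lt_top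
  filter_upwards [ha.eventually (lt_mem_nhds h2K)] with i hi
  rcases eq_or_ne (a i) ∞ with hai | hai
  · have hbi : b i = ∞ := by simpa [hai, hK] using hab i
    simp [hbi]
  have hKa : K ≤ a i / 2 := by
    rw [ENNReal.le_div_iff_mul_le (Or.inl two_ne_zero) (Or.inl ofNat_ne_top), mul_comm]
    exact hi.le
  have hhalf : a i / 2 ≤ b i := by
    refine ENNReal.le_of_add_le_add_left (ENNReal.div_ne_top hai two_ne_zero) ?_
    calc a i / 2 + a i / 2 = a i := ENNReal.add_halves _
      _ ≤ K + b i := hab i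
      _ ≤ a i / 2 + b i := by gcongr
  rwa [ENNReal.div_le_iff_le_mul (Or.inl two_ne_zero) (Or.inl ofNat_ne_top), mul_comm] at hhalf

end ENNReal

namespace MeasureTheory

variable {α : Type*} [MeasurableSpace α]

theorem Measure.le_restrict_add_smul_of_forall {μ ν : Measure α} {S : Set α}
    {c : ℝ≥0∞} (hS : MeasurableSet S)
    (h : ∀ B, MeasurableSet B → B ∩ S = ∅ → μ B ≤ c * ν B) :
    μ ≤ μ.restrict S + c • ν := by
  refine Measure.le_iff.2 fun B hB => ?_
  rw [Measure.add_apply, Measure.smul_apply, smul_eq_mul, Measure.restrict_apply hB,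
    ← measure_inter_add_sdiff B hS]
  gcongr
  calc μ (B \ S) ≤ c * ν (B \ S) := h _ (hB.diff hS) Set.sdiff_inter_self
    _ ≤ c * ν B := by gcongr; exact Set.sdiff_subset

theorem setLIntegral_le_of_le_restrict_add_smul {μ ν : Measure α} {S I : Set α}
    {c M : ℝ≥0∞} {g : α → ℝ≥0∞} (hμ : μ ≤ μ.restrict S + c • ν) (hg : ∀ x, g x ≤ M) :
    ∫⁻ x in I, g x ∂μ ≤ M * μ S + c * ∫⁻ x in I, g x ∂ν :=
  calc ∫⁻ x in I, g x ∂μ ≤ ∫⁻ x in I, g x ∂(μ.restrict S + c • ν) :=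
        lintegral_mono' (Measure.restrict_mono subset_rfl hμ) le_rfl
    _ = ∫⁻ x in I, g x ∂(μ.restrict S) + c * ∫⁻ x in I, g x ∂ν := by
        rw [Measure.restrict_add, lintegral_add_measure, Measure.restrict_smul,
          lintegral_smul_measure, smul_eq_mul]
    _ ≤ ∫⁻ _ in S, M ∂μ + c * ∫⁻ x in I, g x ∂ν := by
        gcongr ?_ + _
        exact (setLIntegral_le_lintegral I g).trans (lintegral_mono hg)
    _ = M * μ S + c * ∫⁻ x in I, g x ∂ν := by rw [setLIntegral_const]

variable {ι : Type*} {f : Filter ι} {I : ι → Set α}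

theorem eventually_inv_measure_le_of_le_restrict_add_smul {ν₁ ν₂ : Measure α} {S : Set α}
    {d : ℝ≥0∞} (hν₁ : Tendsto (fun i => ν₁ (I i)) f (𝓝 ∞)) (hS : ν₁ S ≠ ∞)
    (hν : ν₁ ≤ ν₁.restrict S + d • ν₂) (hd₀ : d ≠ 0) (hd : d ≠ ∞) :
    ∀ᶠ i in f, (ν₂ (I i))⁻¹ ≤ 2 * d * (ν₁ (I i))⁻¹ := by
  have hle : ∀ i, ν₁ (I i) ≤ ν₁ S + d * ν₂ (I i) := fun i =>
    calc ν₁ (I i) ≤ ν₁.restrict S (I i) + d * ν₂ (I i) := hν (I i)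
      _ ≤ ν₁ S + d * ν₂ (I i) := by
        gcongr ?_ + _
        exact (measure_mono (Set.subset_univ _)).trans_eq (Measure.restrict_apply_univ S)
  filter_upwards [ENNReal.eventually_le_two_mul_of_le_add hν₁ hS hle] with i hi
  exact ENNReal.inv_le_mul_inv_of_le_mul (mul_ne_zero two_ne_zero hd₀)
    (ENNReal.mul_ne_top ENNReal.ofNat_ne_top hd) (by rwa [← mul_assoc] at hi)

theorem tendsto_inv_measure_mul_setLIntegral_of_le {μ₁ ν₁ μ₂ ν₂ : Measure α} {S : Set α}
    {g : α → ℝ≥0∞} {M c C : ℝ≥0∞} (hg : ∀ x, g x ≤ M) (hM : M ≠ ∞)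
    (hμ : μ₂ ≤ μ₂.restrict S + c • μ₁) (hc : c ≠ ∞) (hS : μ₂ S ≠ ∞)
    (hν₁ : Tendsto (fun i => ν₁ (I i)) f (𝓝 ∞)) (hC : C ≠ ∞)
    (hν : ∀ᶠ i in f, (ν₂ (I i))⁻¹ ≤ C * (ν₁ (I i))⁻¹)
    (h : Tendsto (fun i => (ν₁ (I i))⁻¹ * ∫⁻ x in I i, g x ∂μ₁) f (𝓝 0)) :
    Tendsto (fun i => (ν₂ (I i))⁻¹ * ∫⁻ x in I i, g x ∂μ₂) f (𝓝 0) := by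
  have hinv : Tendsto (fun i => (ν₁ (I i))⁻¹) f (𝓝 0) := by
    simpa using tendsto_inv_iff.2 hν₁
  have hbound : ∀ᶠ i in f, (ν₂ (I i))⁻¹ * ∫⁻ x in I i, g x ∂μ₂ ≤
      C * (M * μ₂ S) * (ν₁ (I i))⁻¹ + C * c * ((ν₁ (I i))⁻¹ * ∫⁻ x in I i, g x ∂μ₁) := by
    filter_upwards [hν] with i hi
    calc (ν₂ (I i))⁻¹ * ∫⁻ x in I i, g x ∂μ₂
        ≤ C * (ν₁ (I i))⁻¹ * (M * μ₂ S + c * ∫⁻ x in I i, g x ∂μ₁) :=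
          mul_le_mul' hi (setLIntegral_le_of_le_restrict_add_smul hμ hg)
      _ = _ := by ring
  have hlim : Tendsto (fun i => C * (M * μ₂ S) * (ν₁ (I i))⁻¹ +
      C * c * ((ν₁ (I i))⁻¹ * ∫⁻ x in I i, g x ∂μ₁)) f (𝓝 0) := by
    simpa using (ENNReal.Tendsto.const_mul hinv (Or.inr (by finiteness))).add
      (ENNReal.Tendsto.const_mul h (Or.inr (by finiteness)))
  exact tendsto_of_tendsto_of_tendsto_of_le_of_le' tendsto_const_nhds hlim
    (Eventually.of_forall fun _ => zero_le) hbound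

end MeasureTheory

theorem tendsto_measure_Icc_neg_atTop {ν : Measure ℝ} (hν : ν Set.univ = ∞) :
    Tendsto (fun l : ℝ => ν (Set.Icc (-l) l)) atTop (𝓝 ∞) := by
  have hmono : Monotone fun l : ℝ => Set.Icc (-l) l := fun _ _ h =>
    Set.Icc_subset_Icc (neg_le_neg h) h
  have hU : ⋃ l : ℝ, Set.Icc (-l) l = Set.univ :=
    Set.eq_univ_of_forall fun x => Set.mem_iUnion.2 ⟨|x|, abs_le.1 le_rfl⟩
  simpa [Function.comp_def, hU, hν] using tendsto_measure_iUnion_atTop hmono (μ := ν)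

theorem EquivMeas.exists_le_restrict_add_smul {μ ν : Measure ℝ} (h : EquivMeas μ ν) :
    ∃ (r : ℝ) (c : ℝ≥0∞), c ≠ 0 ∧ c ≠ ∞ ∧
      μ ≤ μ.restrict (Set.Icc (-r) r) + c • ν ∧ ν ≤ ν.restrict (Set.Icc (-r) r) + c • μ := by
  obtain ⟨α, β, A, hα₀, hα, hβ₀, hβ, hA, hAB⟩ := h
  obtain ⟨r, hr⟩ := hA.subset_closedBall 0
  rw [Real.closedBall_eq_Icc, zero_sub, zero_add] at hr
  have hdisj : ∀ B : Set ℝ, B ∩ Set.Icc (-r) r = ∅ → B ∩ A = ∅ := fun B hB =>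
    Set.subset_empty_iff.1 (hB ▸ Set.inter_subset_inter_right B hr)
  refine ⟨r, max β α⁻¹, (lt_max_of_lt_left hβ₀).ne',
    (max_lt hβ (ENNReal.inv_lt_top.2 hα₀)).ne,
    Measure.le_restrict_add_smul_of_forall measurableSet_Icc fun B hB hBr => ?_,
    Measure.le_restrict_add_smul_of_forall measurableSet_Icc fun B hB hBr => ?_⟩
  · calc μ B ≤ β * ν B := (hAB B hB (hdisj B hBr)).2
      _ ≤ max β α⁻¹ * ν B := by gcongr; exact le_max_left _ _
  · calc ν B ≤ α⁻¹ * μ B :=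
          (ENNReal.mul_le_iff_le_inv hα₀.ne' hα.ne).1 (hAB B hB (hdisj B hBr)).1
      _ ≤ max β α⁻¹ * μ B := by gcongr; exact le_max_right _ _

theorem weylLocal_le_weylNorm {X : Type*} [NormedAddCommGroup X] (p : ℝ) (u : ℝ → X) (θ : ℝ) :
    weylLocal p u θ ≤ weylNorm p u :=
  limsup_le_limsup (Eventually.of_forall fun h => le_iSup (fun θ => weylAvg p u h θ) θ)

theorem MemO.of_le_restrict_add_smul {X : Type*} [NormedAddCommGroup X] {p : ℝ}
    {μ₁ ν₁ μ₂ ν₂ : Measure ℝ} {r s : ℝ} {c d : ℝ≥0∞} (hν₁ : MemMP ν₁) (hμ₂ : MemMP μ₂)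
    (hμ : μ₂ ≤ μ₂.restrict (Set.Icc (-r) r) + c • μ₁) (hc : c ≠ ∞)
    (hν : ν₁ ≤ ν₁.restrict (Set.Icc (-s) s) + d • ν₂) (hd₀ : d ≠ 0) (hd : d ≠ ∞)
    {u : ℝ → X} (hu : MemO p μ₁ ν₁ u) : MemO p μ₂ ν₂ u := by
  obtain ⟨huW, hu⟩ := hu
  have hν₁I := tendsto_measure_Icc_neg_atTop hν₁.1
  exact ⟨huW, tendsto_inv_measure_mul_setLIntegral_of_le (weylLocal_le_weylNorm p u) huW.2.ne
    hμ hc (hμ₂.2 _ _).ne hν₁I (by finiteness)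
    (eventually_inv_measure_le_of_le_restrict_add_smul hν₁I (hν₁.2 _ _).ne hν hd₀ hd) hu⟩

theorem MemO_equiv_measures_general {X : Type*} [NormedAddCommGroup X] (p : ℝ) (μ₁ ν₁ μ₂ ν₂ : Measure ℝ)
    (hμ₁ : MemMP μ₁) (hν₁ : MemMP ν₁) (hμ₂ : MemMP μ₂) (hν₂ : MemMP ν₂)
    (hμ : EquivMeas μ₁ μ₂) (hν : EquivMeas ν₁ ν₂) :
    ∀ φ : ℝ → X, MemO p μ₁ ν₁ φ ↔ MemO p μ₂ ν₂ φ := by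
  intro φ
  obtain ⟨r, c, -, hc, hμ₁₂, hμ₂₁⟩ := hμ.exists_le_restrict_add_smul
  obtain ⟨s, d, hd₀, hd, hν₁₂, hν₂₁⟩ := hν.exists_le_restrict_add_smul
  exact ⟨MemO.of_le_restrict_add_smul hν₁ hμ₂ hμ₂₁ hc hν₁₂ hd₀ hd,
    MemO.of_le_restrict_add_smul hν₂ hμ₁ hμ₁₂ hc hν₂₁ hd₀ hd⟩

/-- `O^p` only depends on the equivalence classes of the measures. -/
theorem MemO_equiv_measures {X : Type*} [NormedAddCommGroup X] [NormedSpace ℝ X]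
    [CompleteSpace X] (p : ℝ) (hp : 1 ≤ p) (μ₁ ν₁ μ₂ ν₂ : Measure ℝ)
    (hμ₁ : MemMP μ₁) (hν₁ : MemMP ν₁) (hμ₂ : MemMP μ₂) (hν₂ : MemMP ν₂)
    (hμ : EquivMeas μ₁ μ₂) (hν : EquivMeas ν₁ ν₂)
    (hB1 : CondB1 μ₁ ν₁) (hB1' : CondB1 μ₂ ν₂) :
    ∀ φ : ℝ → X, MemO p μ₁ ν₁ φ ↔ MemO p μ₂ ν₂ φ :=
  MemO_equiv_measures_general p μ₁ ν₁ μ₂ ν₂ hμ₁ hν₁ hμ₂ hν₂ hμ hν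
end

section
/- Let μ ∈ M_P. Then μ satisfies condition (B_2) (for all ω ∈ ℝ there exist ρ > 0 and a bounded interval J ⊂ ℝ such that μ({a + ω : a ∈ A}) ≤ ρ μ(A) whenever A is measurable with A ∩ J = ∅) if and only if μ is equivalent to its translate μ_σ for each σ ∈ ℝ. -/
/-!
Shifting by `σ` and back by `-σ` is the identity, so (B₂) at `σ` bounds `μ_σ` by `μ`
from above while (B₂) at `-σ`, applied to the shifted set, bounds it from below; conversely,
the lower bound `α μ_ω ≤ μ` in `μ ∼ μ_ω` is (B₂) at `ω` with `ρ = α⁻¹`.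
-/

open MeasureTheory Filter Topology
open scoped ENNReal NNReal

lemma measurableSet_image_add_const (σ : ℝ) {B : Set ℝ} (hB : MeasurableSet B) :
    MeasurableSet ((· + σ) '' B) := by
  rw [Set.image_add_right]
  exact measurable_add_const _ hB

lemma map_sub_const_apply (μ : Measure ℝ) (σ : ℝ) {B : Set ℝ} (hB : MeasurableSet B) :
    μ.map (fun t => t - σ) B = μ ((· + σ) '' B) := by
  rw [Measure.map_apply (measurable_sub_const σ) hB, Set.image_add_right]
  simp only [sub_eq_add_neg]

lemma isBounded_preimage_add_const (σ : ℝ) {J : Set ℝ} (hJ : Bornology.IsBounded J) :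
    Bornology.IsBounded ((· + σ) ⁻¹' J) :=
  (IsometryEquiv.addRight σ).isometry.antilipschitz.isBounded_preimage hJ

lemma CondB2.equivMeas_map_sub {μ : Measure ℝ} (h : CondB2 μ) (σ : ℝ) :
    EquivMeas μ (μ.map (fun t => t - σ)) := by
  obtain ⟨ρ, J, hρ0, hρ, hJ, hJle⟩ := h σ
  obtain ⟨ρ', J', hρ'0, hρ', hJ', hJ'le⟩ := h (-σ)
  refine ⟨ρ⁻¹, ρ', J ∪ (· + σ) ⁻¹' J', ENNReal.inv_pos.2 hρ.ne, ENNReal.inv_lt_top.2 hρ0,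
    hρ'0, hρ', hJ.union (isBounded_preimage_add_const σ hJ'), fun B hB hBA => ?_⟩
  rw [Set.inter_union_distrib_left, Set.union_empty_iff] at hBA
  have hBJ' : (· + σ) '' B ∩ J' = ∅ := by
    rw [← Set.image_inter_preimage, hBA.2, Set.image_empty]
  rw [map_sub_const_apply μ σ hB]
  constructor
  · exact (ENNReal.inv_mul_le_iff hρ0.ne' hρ.ne).2 (hJle B hB hBA.1)
  · simpa only [Set.image_image, add_neg_cancel_right, Set.image_id'] using hJ'le _ (measurableSet_image_add_const σ hB) hBJ'

lemma condB2_of_forall_equivMeas_map_sub {μ : Measure ℝ}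
    (h : ∀ σ, EquivMeas μ (μ.map (fun t => t - σ))) : CondB2 μ := by
  intro ω
  obtain ⟨α, _, A, hα0, hα, -, -, hA, hle⟩ := h ω
  refine ⟨α⁻¹, A, ENNReal.inv_pos.2 hα.ne, ENNReal.inv_lt_top.2 hα0, hA, fun B hB hBA => ?_⟩
  rw [← ENNReal.inv_mul_le_iff (ENNReal.inv_ne_zero.2 hα.ne) (ENNReal.inv_ne_top.2 hα0.ne'),
    inv_inv, ← map_sub_const_apply μ ω hB]
  exact (hle B hB hBA).1

theorem condB2_iff_equiv_translates_general (μ : Measure ℝ) :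
    CondB2 μ ↔ ∀ σ : ℝ, EquivMeas μ (Measure.map (fun t => t - σ) μ) :=
  ⟨CondB2.equivMeas_map_sub, condB2_of_forall_equivMeas_map_sub⟩

/-- `μ` satisfies `(B₂)` iff `μ` is equivalent to every translate `μ_σ`. -/
theorem condB2_iff_equiv_translates (μ : Measure ℝ) (hμ : MemMP μ) :
    CondB2 μ ↔ ∀ σ : ℝ, EquivMeas μ (Measure.map (fun t => t - σ) μ) :=
  condB2_iff_equiv_translates_general μ
end

section
/- Let U(t,s) be an evolution family with ‖U(t,s)‖ ≤ K e^{−λ(t−s)} for t ≥ s, K ≥ 1, λ > 0, and let f : ℝ × X → X satisfy ‖f(t,x) − f(t,y)‖ ≤ L_f ‖x−y‖ and ‖f(t,x)‖ ≤ M_f(1 + ‖x‖) for all t, x, y. If K L_f / λ < 1, then the operator T defined by (T x)(t) = ∫_{−∞}^{t} U(t,s) f(s, x(s)) ds maps L^∞(ℝ, X) into itself, is a contraction with contraction constant K L_f / λ, and hence has a unique fixed point in L^∞(ℝ, X) (the unique bounded mild solution of x'(t) = A(t)x(t) + f(t, x(t))). -/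
/-!
Integrating the bound `‖U(t,s)‖ ≤ K e^{-λ(t-s)}` over `(-∞, t]` produces the factor `K/λ`, so the
operator `T` sends bounded functions to bounded ones and is `K L_f/λ`-Lipschitz for the sup
norm. By dominated convergence `T x` is continuous, so `T` restricts to a contraction of the
Banach space of bounded continuous functions and has a fixed point there; any bounded measurable
fixed point `x = T x` is itself continuous, so it is that fixed point.
-/

open MeasureTheory Filter Topology

/-- Bounded measurable functions `ℝ → X` (our model of `L^∞(ℝ, X)`). -/
def BddMeas {X : Type*} [NormedAddCommGroup X] (x : ℝ → X) : Prop :=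
  AEStronglyMeasurable x volume ∧ ∃ C : ℝ, ∀ t : ℝ, ‖x t‖ ≤ C

open Set Real

theorem exp_neg_mul_sub_eq (lam c s : ℝ) :
    exp (-lam * (c - s)) = exp (-lam * c) * exp (lam * s) := by
  rw [← exp_add]; ring_nf

theorem integrableOn_exp_neg_mul_sub_Iic {lam : ℝ} (hlam : 0 < lam) (c t : ℝ) :
    IntegrableOn (fun s => exp (-lam * (c - s))) (Iic t) := by
  simp_rw [exp_neg_mul_sub_eq]
  exact (integrableOn_exp_mul_Iic hlam t).const_mul _

theorem integral_exp_neg_mul_sub_Iic {lam : ℝ} (hlam : 0 < lam) (t : ℝ) :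
    ∫ s in Iic t, exp (-lam * (t - s)) = lam⁻¹ := by
  simp only [exp_neg_mul_sub_eq, integral_const_mul, integral_exp_mul_Iic hlam]
  rw [neg_mul, exp_neg]
  field_simp

theorem ContinuousLinearMap.continuous_uncurry_of_continuous_apply {α 𝕜 E F : Type*}
    [TopologicalSpace α] [WeaklyLocallyCompactSpace α] [NontriviallyNormedField 𝕜]
    [NormedAddCommGroup E] [NormedSpace 𝕜 E] [CompleteSpace E]
    [NormedAddCommGroup F] [NormedSpace 𝕜 F] {V : α → E →L[𝕜] F}
    (hV : ∀ v, Continuous fun a => V a v) : Continuous fun p : α × E => V p.1 p.2 := by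
  refine continuous_iff_continuousAt.2 fun ⟨a₀, v₀⟩ => ?_
  obtain ⟨N, hNc, hN⟩ := exists_compact_mem_nhds a₀
  obtain ⟨C, hC⟩ : ∃ C, ∀ a : N, ‖V a‖ ≤ C := banach_steinhaus fun v => by
    obtain ⟨C, hC⟩ := hNc.exists_bound_of_continuousOn (hV v).continuousOn
    exact ⟨C, fun a => hC a a.2⟩
  have hsplit : ∀ p : α × E, V p.1 p.2 - V a₀ v₀ = V p.1 (p.2 - v₀) + (V p.1 v₀ - V a₀ v₀) :=
    fun p => by rw [map_sub]; abel
  rw [ContinuousAt, tendsto_iff_norm_sub_tendsto_zero]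
  have hN' : ∀ᶠ p : α × E in 𝓝 (a₀, v₀), p.1 ∈ N := continuousAt_fst.preimage_mem_nhds hN
  refine squeeze_zero' (g := fun p : α × E => C * ‖p.2 - v₀‖ + ‖V p.1 v₀ - V a₀ v₀‖)
    (Eventually.of_forall fun _ => norm_nonneg _) (hN'.mono fun p hp => ?_) ?_
  · rw [hsplit]
    exact (norm_add_le _ _).trans (add_le_add_left
      ((V p.1).le_of_opNorm_le (hC ⟨p.1, hp⟩) _) _)
  · have h : Continuous fun p : α × E => C * ‖p.2 - v₀‖ + ‖V p.1 v₀ - V a₀ v₀‖ := by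
      have := hV v₀; fun_prop
    simpa using h.tendsto (a₀, v₀)

theorem continuousAt_indicator_Iic_of_ne {G : Type*} [TopologicalSpace G] [Zero G]
    {φ : ℝ → ℝ → G} {s t₀ : ℝ} (hφ : ContinuousAt (fun t => φ t s) t₀) (hs : s ≠ t₀) :
    ContinuousAt (fun t => (Iic t).indicator (φ t) s) t₀ := by
  rcases hs.lt_or_gt with h | h
  · refine hφ.congr ?_
    filter_upwards [Ioi_mem_nhds h] with t ht
    rw [indicator_of_mem (mem_Iic.2 ht.le)]
  · refine (continuousAt_const (y := (0 : G))).congr ?_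
    filter_upwards [Iio_mem_nhds h] with t ht
    rw [indicator_of_notMem (mt mem_Iic.1 (not_le.2 ht))]

section EvolutionFamily

variable {E F : Type*} [NormedAddCommGroup E] [NormedSpace ℝ E]
  [NormedAddCommGroup F] [NormedSpace ℝ F]

def IsExpBounded (U : ℝ → ℝ → E →L[ℝ] F) (K lam : ℝ) : Prop :=
  ∀ t s : ℝ, s ≤ t → ‖U t s‖ ≤ K * exp (-lam * (t - s))

variable {U : ℝ → ℝ → E →L[ℝ] F} {K lam M t : ℝ} {g : ℝ → E}

theorem IsExpBounded.norm_apply_le (hU : IsExpBounded U K lam) (hg : ∀ s, ‖g s‖ ≤ M)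
    {s : ℝ} (hst : s ≤ t) : ‖U t s (g s)‖ ≤ K * M * exp (-lam * (t - s)) :=
  calc ‖U t s (g s)‖ ≤ ‖U t s‖ * ‖g s‖ := (U t s).le_opNorm _
    _ ≤ K * exp (-lam * (t - s)) * M :=
      mul_le_mul (hU t s hst) (hg s) (norm_nonneg _) ((norm_nonneg _).trans (hU t s hst))
    _ = K * M * exp (-lam * (t - s)) := by ring

theorem IsExpBounded.ae_restrict_norm_apply_le (hU : IsExpBounded U K lam)
    (hg : ∀ s, ‖g s‖ ≤ M) (t : ℝ) :
    ∀ᵐ s ∂volume.restrict (Iic t), ‖U t s (g s)‖ ≤ K * M * exp (-lam * (t - s)) :=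
  (ae_restrict_iff' measurableSet_Iic).2 (Eventually.of_forall fun _ => hU.norm_apply_le hg)

theorem IsExpBounded.norm_setIntegral_Iic_le (hU : IsExpBounded U K lam) (hlam : 0 < lam)
    (hg : ∀ s, ‖g s‖ ≤ M) (t : ℝ) : ‖∫ s in Iic t, U t s (g s)‖ ≤ K * M / lam :=
  calc ‖∫ s in Iic t, U t s (g s)‖ ≤ ∫ s in Iic t, K * M * exp (-lam * (t - s)) :=
        norm_integral_le_of_norm_le ((integrableOn_exp_neg_mul_sub_Iic hlam t t).const_mul _)
          (hU.ae_restrict_norm_apply_le hg t)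
    _ = K * M / lam := by
        rw [integral_const_mul, integral_exp_neg_mul_sub_Iic hlam, div_eq_mul_inv]

variable [CompleteSpace E]

theorem aestronglyMeasurable_apply_of_continuous (hUc : ∀ v, Continuous fun s => U t s v)
    (hg : AEStronglyMeasurable g volume) :
    AEStronglyMeasurable (fun s => U t s (g s)) volume :=
  (ContinuousLinearMap.continuous_uncurry_of_continuous_apply hUc).comp_aestronglyMeasurable
    (aestronglyMeasurable_id.prodMk hg)

theorem IsExpBounded.integrableOn_Iic (hU : IsExpBounded U K lam) (hlam : 0 < lam)
    (hUc : ∀ v, Continuous fun s => U t s v) (hg : BddMeas g) :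
    IntegrableOn (fun s => U t s (g s)) (Iic t) := by
  obtain ⟨hgm, M, hM⟩ := hg
  exact ((integrableOn_exp_neg_mul_sub_Iic hlam t t).const_mul (K * M)).mono'
    (aestronglyMeasurable_apply_of_continuous hUc hgm).restrict
    (hU.ae_restrict_norm_apply_le hM t)

theorem IsExpBounded.norm_setIntegral_Iic_sub_le (hU : IsExpBounded U K lam) (hlam : 0 < lam)
    (hUc : ∀ v, Continuous fun s => U t s v) {g₁ g₂ : ℝ → E} (hg₁ : BddMeas g₁)
    (hg₂ : BddMeas g₂) (h : ∀ s, ‖g₁ s - g₂ s‖ ≤ M) :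
    ‖(∫ s in Iic t, U t s (g₁ s)) - ∫ s in Iic t, U t s (g₂ s)‖ ≤ K * M / lam := by
  rw [← integral_sub (hU.integrableOn_Iic hlam hUc hg₁) (hU.integrableOn_Iic hlam hUc hg₂)]
  simpa only [map_sub] using hU.norm_setIntegral_Iic_le hlam h t

theorem IsExpBounded.continuous_setIntegral_Iic (hU : IsExpBounded U K lam) (hK : 0 ≤ K)
    (hlam : 0 < lam) (hUc : ∀ v, Continuous fun q : ℝ × ℝ => U q.1 q.2 v) (hg : BddMeas g) :
    Continuous fun t => ∫ s in Iic t, U t s (g s) := by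
  obtain ⟨hgm, M, hM⟩ := hg
  have hM₀ : 0 ≤ M := (norm_nonneg _).trans (hM 0)
  simp_rw [← integral_indicator measurableSet_Iic]
  refine continuous_iff_continuousAt.2 fun t₀ => continuousAt_of_dominated
    (bound := (Iic (t₀ + 1)).indicator fun s => K * M * exp (-lam * (t₀ - 1 - s))) ?_ ?_ ?_ ?_
  · exact Eventually.of_forall fun t =>
      (aestronglyMeasurable_apply_of_continuous (fun v => (hUc v).comp (.prodMk_right t))
        hgm).indicator measurableSet_Iic
  · filter_upwards [Ioo_mem_nhds (sub_one_lt t₀) (lt_add_one t₀)] with t ht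
    refine Eventually.of_forall fun s => ?_
    rw [norm_indicator_eq_indicator_norm]
    by_cases hs : s ≤ t
    · rw [indicator_of_mem (mem_Iic.2 hs), indicator_of_mem (mem_Iic.2 (hs.trans ht.2.le))]
      refine (hU.norm_apply_le hM hs).trans (mul_le_mul_of_nonneg_left ?_ (by positivity))
      exact exp_le_exp.2 (by nlinarith [ht.1])
    · rw [indicator_of_notMem (mt mem_Iic.1 hs)]
      exact indicator_nonneg (fun _ _ => by positivity) _
  · exact (integrable_indicator_iff measurableSet_Iic).2
      ((integrableOn_exp_neg_mul_sub_Iic hlam _ _).const_mul _)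
  · filter_upwards [Measure.ae_ne volume t₀] with s hs
    exact continuousAt_indicator_Iic_of_ne
      ((hUc (g s)).comp (.prodMk_left s)).continuousAt hs

theorem IsExpBounded.bddMeas_setIntegral_Iic (hU : IsExpBounded U K lam) (hK : 0 ≤ K)
    (hlam : 0 < lam) (hUc : ∀ v, Continuous fun q : ℝ × ℝ => U q.1 q.2 v) (hg : BddMeas g) :
    BddMeas fun t => ∫ s in Iic t, U t s (g s) := by
  refine ⟨(hU.continuous_setIntegral_Iic hK hlam hUc hg).aestronglyMeasurable, ?_⟩
  obtain ⟨-, M, hM⟩ := hg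
  exact ⟨K * M / lam, hU.norm_setIntegral_Iic_le hlam hM⟩

end EvolutionFamily

open BoundedContinuousFunction in
theorem existsUnique_bddMeas_fixedPoint {X : Type*} [NormedAddCommGroup X] [CompleteSpace X]
    {T : (ℝ → X) → ℝ → X} {θ : ℝ} (hθ₀ : 0 ≤ θ) (hθ : θ < 1)
    (hbdd : ∀ x, BddMeas x → BddMeas (T x)) (hcont : ∀ x, BddMeas x → Continuous (T x))
    (hlip : ∀ x y, BddMeas x → BddMeas y → ∀ C, (∀ t, ‖x t - y t‖ ≤ C) →
      ∀ t, ‖T x t - T y t‖ ≤ θ * C) :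
    ∃! x, BddMeas x ∧ ∀ t, x t = T x t := by
  have hBC : ∀ z : ℝ →ᵇ X, BddMeas z := fun z =>
    ⟨z.continuous.aestronglyMeasurable, ‖z‖, z.norm_coe_le_norm⟩
  choose C hC using fun x hx => (hbdd x hx).2
  let Φ : (ℝ →ᵇ X) → ℝ →ᵇ X := fun z =>
    .ofNormedAddCommGroup (T z) (hcont z (hBC z)) (C z (hBC z)) (hC z (hBC z))
  have hΦ : ContractingWith ⟨θ, hθ₀⟩ Φ := by
    refine ⟨hθ, LipschitzWith.of_dist_le_mul fun z w => ?_⟩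
    refine (dist_le (by positivity)).2 fun t => ?_
    rw [dist_eq_norm]
    exact hlip z w (hBC z) (hBC w) (dist z w)
      (fun s => by rw [← dist_eq_norm]; exact dist_coe_le_dist s) t
  refine ⟨⇑(hΦ.fixedPoint Φ), ⟨hBC _, fun t => ?_⟩, ?_⟩
  · exact (DFunLike.congr_fun hΦ.fixedPoint_isFixedPt t).symm
  · rintro x ⟨hx, hfix⟩
    -- a bounded measurable fixed point equals `T x`, hence is continuous
    let z : ℝ →ᵇ X := .ofNormedAddCommGroup x (by rw [funext hfix]; exact hcont x hx)
      hx.2.choose hx.2.choose_spec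
    have hz : Function.IsFixedPt Φ z := by ext t; exact (hfix t).symm
    exact congrArg (⇑) (hΦ.fixedPoint_unique hz)

/-- the integral operator `(T x)(t) = ∫_{-∞}^t U(t,s) f(s, x(s)) ds`
maps `L^∞(ℝ, X)` into itself, is a contraction with constant `K L_f / λ`, and has a
unique fixed point in `L^∞(ℝ, X)` — the unique bounded mild solution of
`x' = A(t)x + f(t,x)`. -/
theorem contraction_unique_bounded_mild_solution {X : Type*} [NormedAddCommGroup X]
    [NormedSpace ℝ X] [CompleteSpace X]
    (U : ℝ → ℝ → X →L[ℝ] X) (f : ℝ → X → X) (K lam Lf Mf : ℝ)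
    (hK : 1 ≤ K) (hlam : 0 < lam) (hLf : 0 < Lf) (hMf : 0 < Mf)
    (hU : ∀ t s : ℝ, s ≤ t → ‖U t s‖ ≤ K * Real.exp (-lam * (t - s)))
    (hUc : ∀ x : X, Continuous fun q : ℝ × ℝ => U q.1 q.2 x)
    (hfm : ∀ x : ℝ → X, AEStronglyMeasurable x volume →
      AEStronglyMeasurable (fun s => f s (x s)) volume)
    (hLip : ∀ (t : ℝ) (x y : X), ‖f t x - f t y‖ ≤ Lf * ‖x - y‖)
    (hGrow : ∀ (t : ℝ) (x : X), ‖f t x‖ ≤ Mf * (1 + ‖x‖))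
    (hΘ : K * Lf / lam < 1) :
    (∀ x : ℝ → X, BddMeas x →
      BddMeas (fun t => ∫ s in Set.Iic t, U t s (f s (x s)))) ∧
    (∀ x y : ℝ → X, BddMeas x → BddMeas y → ∀ C : ℝ, (∀ t, ‖x t - y t‖ ≤ C) →
      ∀ t : ℝ, ‖(∫ s in Set.Iic t, U t s (f s (x s))) -
          ∫ s in Set.Iic t, U t s (f s (y s))‖ ≤ (K * Lf / lam) * C) ∧
    (∃! x : ℝ → X, BddMeas x ∧ ∀ t : ℝ, x t = ∫ s in Set.Iic t, U t s (f s (x s))) := by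
  have hU' : IsExpBounded U K lam := hU
  have hK₀ : 0 ≤ K := zero_le_one.trans hK
  have hfx : ∀ x, BddMeas x → BddMeas fun s => f s (x s) := by
    rintro x ⟨hxm, C, hC⟩
    exact ⟨hfm x hxm, Mf * (1 + C), fun s => (hGrow s (x s)).trans (by gcongr; exact hC s)⟩
  have hbdd : ∀ x, BddMeas x → BddMeas fun t => ∫ s in Iic t, U t s (f s (x s)) :=
    fun x hx => hU'.bddMeas_setIntegral_Iic hK₀ hlam hUc (hfx x hx)
  have hcontr : ∀ x y : ℝ → X, BddMeas x → BddMeas y → ∀ C : ℝ, (∀ t, ‖x t - y t‖ ≤ C) →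
      ∀ t : ℝ, ‖(∫ s in Iic t, U t s (f s (x s))) - ∫ s in Iic t, U t s (f s (y s))‖ ≤
        (K * Lf / lam) * C := by
    intro x y hx hy C hC t
    have hfC : ∀ s, ‖f s (x s) - f s (y s)‖ ≤ Lf * C := fun s =>
      (hLip s _ _).trans (by gcongr; exact hC s)
    calc _ ≤ K * (Lf * C) / lam := hU'.norm_setIntegral_Iic_sub_le hlam
            (fun v => (hUc v).comp (.prodMk_right t)) (hfx x hx) (hfx y hy) hfC
      _ = K * Lf / lam * C := by ring
  exact ⟨hbdd, hcontr, existsUnique_bddMeas_fixedPoint (by positivity) hΘ hbdd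
    (fun x hx => hU'.continuous_setIntegral_Iic hK₀ hlam hUc (hfx x hx)) hcontr⟩
end
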